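/- Let f_1, …, f_r and g_1, …, g_s be analytic functions on a neighborhood of 0 in ℂ^d, with each family not all identically zero, let k, ℓ ≥ 0 be integers, and let c ≥ 0 be real. Suppose u is analytic near 0 and can be written as a finite sum u = ∑_t c_t · f_{i(t,1)} ⋯ f_{i(t,k)}, where each c_t is analytic near 0 and each factor f_{i(t,j)} is one of f_1, …, f_r (i.e. u lies in the k-th power of the ideal generated by the f_i in the ring of analytic germs at 0). If h is analytic near 0 and z ↦ |h(z)|² / ((∑_i |f_i(z)|²)^ℓ · (∑_j |g_j(z)|²)^c) is locally integrable near 0, then z ↦ |u(z) h(z)|² / ((∑_i |f_i(z)|²)^{k+ℓ} · (∑_j |g_j(z)|²)^c) is locally integrable near 0. (This expresses the inclusion 𝔞^k · 𝒥(𝔞^ℓ 𝔟^c) ⊆ 𝒥(𝔞^{k+ℓ} 𝔟^c).) -/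

import Mathlib

/-!
Near `0` the coefficients of `u = ∑ₜ cₜ ∏ⱼ f_{i(t,j)}` are bounded, and each product of `k` of
the `fᵢ` is bounded by `(maxᵢ |fᵢ|)ᵏ ≤ (∑ᵢ |fᵢ|²)^{k/2}`; hence `|u|² / (∑ᵢ |fᵢ|²)ᵏ` is bounded
near `0`. The integrand for `𝔞^{k+ℓ} 𝔟^c` is this bounded measurable factor times the integrand
for `𝔞^ℓ 𝔟^c` — pointwise, including where a denominator vanishes, since then both sides are `0`
— and a bounded measurable function times an integrable one is integrable.
-/

open MeasureTheory

def LocIntegrableNearOrigin {d : ℕ} (g : (Fin d → ℂ) → ℝ) : Prop :=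
  ∃ U ∈ nhds (0 : Fin d → ℂ), IntegrableOn g U volume

open Filter Topology

section NormBounds

variable {ι τ R : Type*} [Fintype ι] [Fintype τ]

theorem pi_norm_sq_le_sum_norm_sq {E : Type*} [SeminormedAddCommGroup E] (x : ι → E) :
    ‖x‖ ^ 2 ≤ ∑ i, ‖x i‖ ^ 2 := by
  have hsum : 0 ≤ ∑ i, ‖x i‖ ^ 2 := by positivity
  have hnorm : ‖x‖ ≤ √(∑ i, ‖x i‖ ^ 2) := (pi_norm_le_iff_of_nonneg (Real.sqrt_nonneg _)).2
    fun i => (Real.le_sqrt (norm_nonneg _) hsum).2 <|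
      Finset.single_le_sum (f := fun i => ‖x i‖ ^ 2) (fun _ _ => sq_nonneg _) (Finset.mem_univ i)
  exact (Real.le_sqrt (norm_nonneg _) hsum).1 hnorm

variable [NormedCommRing R] [NormOneClass R] {k : ℕ}

theorem norm_sum_mul_prod_le (a : τ → R) (x : ι → R) (idx : τ → Fin k → ι) :
    ‖∑ t, a t * ∏ j, x (idx t j)‖ ≤ (∑ t, ‖a t‖) * ‖x‖ ^ k := by
  have hprod (t : τ) : ‖∏ j, x (idx t j)‖ ≤ ‖x‖ ^ k :=
    calc ‖∏ j, x (idx t j)‖ ≤ ∏ j, ‖x (idx t j)‖ := Finset.norm_prod_le _ _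
      _ ≤ ∏ _j : Fin k, ‖x‖ :=
        Finset.prod_le_prod (fun _ _ => norm_nonneg _) fun j _ => norm_le_pi_norm x (idx t j)
      _ = ‖x‖ ^ k := by simp
  calc ‖∑ t, a t * ∏ j, x (idx t j)‖ ≤ ∑ t, ‖a t‖ * ‖x‖ ^ k :=
        (norm_sum_le _ _).trans <| Finset.sum_le_sum fun t _ =>
          (norm_mul_le _ _).trans <| mul_le_mul_of_nonneg_left (hprod t) (norm_nonneg _)
    _ = (∑ t, ‖a t‖) * ‖x‖ ^ k := Finset.sum_mul _ _ _ |>.symm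

theorem norm_sq_sum_mul_prod_div_le (a : τ → R) (x : ι → R) (idx : τ → Fin k → ι) :
    ‖∑ t, a t * ∏ j, x (idx t j)‖ ^ 2 / (∑ i, ‖x i‖ ^ 2) ^ k ≤ (∑ t, ‖a t‖) ^ 2 := by
  refine div_le_of_le_mul₀ (by positivity) (by positivity) ?_
  calc ‖∑ t, a t * ∏ j, x (idx t j)‖ ^ 2 ≤ ((∑ t, ‖a t‖) * ‖x‖ ^ k) ^ 2 :=
        pow_le_pow_left₀ (norm_nonneg _) (norm_sum_mul_prod_le a x idx) 2
    _ = (∑ t, ‖a t‖) ^ 2 * (‖x‖ ^ 2) ^ k := by ring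
    _ ≤ (∑ t, ‖a t‖) ^ 2 * (∑ i, ‖x i‖ ^ 2) ^ k := by
        gcongr
        exact pi_norm_sq_le_sum_norm_sq x

theorem eventually_norm_sq_sum_mul_prod_div_le {X : Type*} [TopologicalSpace X] {x₀ : X}
    (a : τ → X → R) (ha : ∀ t, ContinuousAt (a t) x₀) (x : ι → X → R) (idx : τ → Fin k → ι) :
    ∃ C, ∀ᶠ z in 𝓝 x₀,
      ‖∑ t, a t z * ∏ j, x (idx t j) z‖ ^ 2 / (∑ i, ‖x i z‖ ^ 2) ^ k ≤ C := by
  have hcont : ContinuousAt (fun z => ∑ t, ‖a t z‖) x₀ := by fun_prop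
  refine ⟨(∑ t, ‖a t x₀‖ + 1) ^ 2, ?_⟩
  filter_upwards [hcont.eventually_lt continuousAt_const (lt_add_one _)] with z hz
  calc _ ≤ (∑ t, ‖a t z‖) ^ 2 := norm_sq_sum_mul_prod_div_le (a · z) (x · z) idx
    _ ≤ (∑ t, ‖a t x₀‖ + 1) ^ 2 := pow_le_pow_left₀ (by positivity) hz.le 2

end NormBounds

theorem mul_div_pow_add_mul {α : Type*} [DivisionCommMonoid α] (a b x y : α) (k l : ℕ) :
    a * b / (x ^ (k + l) * y) = a / x ^ k * (b / (x ^ l * y)) := by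
  rw [pow_add, mul_assoc, mul_div_mul_comm]

theorem LocIntegrableNearOrigin.bdd_mul {d : ℕ} {m φ : (Fin d → ℂ) → ℝ}
    (hφ : LocIntegrableNearOrigin φ) {W : Set (Fin d → ℂ)} (hWo : IsOpen W) (hW0 : 0 ∈ W)
    (hm : AEStronglyMeasurable m (volume.restrict W)) {C : ℝ} (hC : ∀ z ∈ W, ‖m z‖ ≤ C) :
    LocIntegrableNearOrigin fun z => m z * φ z := by
  obtain ⟨U, hU, hφU⟩ := hφ
  refine ⟨W ∩ U, inter_mem (hWo.mem_nhds hW0) hU,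
    (hφU.mono_set Set.inter_subset_right).bdd_mul (c := C) (hm.mono_set Set.inter_subset_left) ?_⟩
  exact ae_mono (Measure.restrict_mono Set.inter_subset_left le_rfl)
    (ae_restrict_of_forall_mem hWo.measurableSet hC)

theorem power_ideal_multiplier_inclusion_general {d r s : ℕ}
    (f : Fin r → (Fin d → ℂ) → ℂ) (g : Fin s → (Fin d → ℂ) → ℂ)
    (U : Set (Fin d → ℂ)) (hU : U ∈ nhds 0)
    (hf : ∀ i, ∀ z ∈ U, AnalyticAt ℂ (f i) z)
    (k l : ℕ) (c : ℝ)
    (u : (Fin d → ℂ) → ℂ) (hu : ∀ z ∈ U, AnalyticAt ℂ u z)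
    (hmem : ∃ (T : ℕ) (coeff : Fin T → (Fin d → ℂ) → ℂ)
      (idx : Fin T → Fin k → Fin r) (V : Set (Fin d → ℂ)), V ∈ nhds 0 ∧
      (∀ t, ∀ z ∈ V, AnalyticAt ℂ (coeff t) z) ∧
      ∀ z ∈ V, u z = ∑ t, coeff t z * ∏ j, f (idx t j) z)
    (h : (Fin d → ℂ) → ℂ)
    (hint : LocIntegrableNearOrigin fun z =>
      ‖h z‖ ^ 2 / ((∑ i, ‖f i z‖ ^ 2) ^ l * (∑ j, ‖g j z‖ ^ 2) ^ c)) :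
    LocIntegrableNearOrigin fun z =>
      ‖u z * h z‖ ^ 2 / ((∑ i, ‖f i z‖ ^ 2) ^ (k + l) * (∑ j, ‖g j z‖ ^ 2) ^ c) := by
  obtain ⟨T, coeff, idx, V, hV, hcoeff, hrep⟩ := hmem
  obtain ⟨C, hC⟩ := eventually_norm_sq_sum_mul_prod_div_le coeff
    (fun t => (hcoeff t 0 (mem_of_mem_nhds hV)).continuousAt) f idx
  obtain ⟨W, hW, hWo, hW0⟩ := eventually_nhds_iff.1 ((hC.and hV).and hU)
  have hWU : W ⊆ U := fun z hz => (hW z hz).2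
  have huW : ContinuousOn u W := (AnalyticOnNhd.mono hu hWU).continuousOn
  have hfW (i : Fin r) : ContinuousOn (f i) W := (AnalyticOnNhd.mono (hf i) hWU).continuousOn
  have hmW : AEStronglyMeasurable (fun z => ‖u z‖ ^ 2 / (∑ i, ‖f i z‖ ^ 2) ^ k)
      (volume.restrict W) :=
    ((ContinuousOn.aemeasurable (by fun_prop) hWo.measurableSet).div
      (ContinuousOn.aemeasurable (by fun_prop) hWo.measurableSet)).aestronglyMeasurable
  simp_rw [norm_mul, mul_pow, mul_div_pow_add_mul]
  refine hint.bdd_mul hWo hW0 hmW (C := C) fun z hz => ?_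
  obtain ⟨⟨hCz, hVz⟩, -⟩ := hW z hz
  rw [Real.norm_of_nonneg (by positivity), hrep z hVz]
  exact hCz

/-- The inclusion `𝔞^k · 𝒥(𝔞^ℓ 𝔟^c) ⊆ 𝒥(𝔞^{k+ℓ} 𝔟^c)`, local analytic form: if `u`
lies in the `k`-th power of the ideal generated by the `fᵢ` (i.e. `u` is a finite
sum of products of `k` of the `fᵢ` with analytic coefficients) and `h` satisfies the
integrability condition for `𝔞^ℓ 𝔟^c`, then `u·h` satisfies the integrability
condition for `𝔞^{k+ℓ} 𝔟^c`. -/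
theorem power_ideal_multiplier_inclusion {d r s : ℕ}
    (f : Fin r → (Fin d → ℂ) → ℂ) (g : Fin s → (Fin d → ℂ) → ℂ)
    (U : Set (Fin d → ℂ)) (hU : U ∈ nhds 0)
    (hf : ∀ i, ∀ z ∈ U, AnalyticAt ℂ (f i) z)
    (hg : ∀ j, ∀ z ∈ U, AnalyticAt ℂ (g j) z)
    (hfnz : ∀ V ∈ nhds (0 : Fin d → ℂ), ∃ z ∈ V, ∃ i, f i z ≠ 0)
    (hgnz : ∀ V ∈ nhds (0 : Fin d → ℂ), ∃ z ∈ V, ∃ j, g j z ≠ 0)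
    (k l : ℕ) (c : ℝ) (hc : 0 ≤ c)
    (u : (Fin d → ℂ) → ℂ) (hu : ∀ z ∈ U, AnalyticAt ℂ u z)
    (hmem : ∃ (T : ℕ) (coeff : Fin T → (Fin d → ℂ) → ℂ)
      (idx : Fin T → Fin k → Fin r) (V : Set (Fin d → ℂ)), V ∈ nhds 0 ∧
      (∀ t, ∀ z ∈ V, AnalyticAt ℂ (coeff t) z) ∧
      ∀ z ∈ V, u z = ∑ t, coeff t z * ∏ j, f (idx t j) z)
    (h : (Fin d → ℂ) → ℂ) (hh : ∀ z ∈ U, AnalyticAt ℂ h z)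
    (hint : LocIntegrableNearOrigin fun z =>
      ‖h z‖ ^ 2 / ((∑ i, ‖f i z‖ ^ 2) ^ l * (∑ j, ‖g j z‖ ^ 2) ^ c)) :
    LocIntegrableNearOrigin fun z =>
      ‖u z * h z‖ ^ 2 / ((∑ i, ‖f i z‖ ^ 2) ^ (k + l) * (∑ j, ‖g j z‖ ^ 2) ^ c) :=
  power_ideal_multiplier_inclusion_general f g U hU hf k l c u hu hmem h hint
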